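/- arXiv:2010.15539 — 8 statements merged into one kernel-verified Lean document; each statement's English description precedes it below -/
import Mathlib

section
/- For a connected weighted network C on d ≥ 2 vertices with unit total weight, the maximum vertex weight satisfies max_i c_i ≤ γ, where γ = max(|1-λ_2|, |1-λ_d|) and λ_2, λ_d are the second-smallest and largest eigenvalues of the Laplacian Δ = I - D^{-1}C with respect to the weighted inner product. -/
/-!
Expanding in the `D`-orthonormal eigenbasis, `⟨p, D⁻¹Cp⟩ = ∑ₖ (1 - λₖ) ⟨p, vₖ⟩² ≥ (1 - λ_d) ⟨p, p⟩`
for every `p`, and `1 - λ_d ≥ -γ`. For `p = e_i - c_i 𝟙` one computes `⟨p, p⟩ = c_i (1 - c_i)` and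
`⟨p, D⁻¹Cp⟩ = -c_i²`, whence `c_i ≤ c_i / (1 - c_i) ≤ γ`.
-/

open Finset Matrix

section Spectral

variable {ι : Type*} [Fintype ι]

def weightedInner (c p q : ι → ℝ) : ℝ := ∑ i, c i * p i * q i

/-- `⟨p, D⁻¹Cp⟩` for the inner product weighted by `D = diag c`. -/
def quadForm (C : ι → ι → ℝ) (p : ι → ℝ) : ℝ := ∑ i, p i * ∑ j, C i j * p j

variable {c : ι → ℝ} {v : ι → ι → ℝ}

theorem weightedInner_sum_mul_right (p a : ι → ℝ) :
    weightedInner c p (fun j => ∑ k, a k * v k j) = ∑ k, a k * weightedInner c p (v k) := by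
  simp only [weightedInner, mul_sum]
  rw [sum_comm]
  exact sum_congr rfl fun k _ => sum_congr rfl fun j _ => by ring

theorem sum_weightedInner_mul_eq_self [DecidableEq ι]
    (horth : ∀ k l, weightedInner c (v k) (v l) = if k = l then 1 else 0) (p : ι → ℝ) :
    (fun i => ∑ k, weightedInner c p (v k) * v k i) = p := by
  -- a one-sided inverse of a square matrix is two-sided: `V (D Vᵀ) = 1` gives `(D Vᵀ) V = 1`
  have hright : of v * of (fun i l => c i * v l i) = 1 := by
    ext k l
    rw [one_apply, ← horth k l]
    exact sum_congr rfl fun j _ => by simp only [of_apply]; ring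
  have hleft := congrFun₂ (mul_eq_one_comm (M := Matrix ι ι ℝ) |>.mp hright)
  simp only [mul_apply, of_apply, one_apply] at hleft
  ext i
  calc ∑ k, weightedInner c p (v k) * v k i = ∑ j, p j * ∑ k, c j * v k j * v k i := by
        simp only [weightedInner, sum_mul, mul_sum]
        rw [sum_comm]
        exact sum_congr rfl fun j _ => sum_congr rfl fun k _ => by ring
    _ = p i := by simp [hleft]

theorem weightedInner_eq_sum_mul [DecidableEq ι]
    (horth : ∀ k l, weightedInner c (v k) (v l) = if k = l then 1 else 0) (p q : ι → ℝ) :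
    weightedInner c p q = ∑ k, weightedInner c q (v k) * weightedInner c p (v k) := by
  conv_lhs => rw [← sum_weightedInner_mul_eq_self horth q]
  exact weightedInner_sum_mul_right p _

variable [DecidableEq ι] {C : ι → ι → ℝ} {μ : ι → ℝ}

theorem quadForm_eq_sum
    (heig : ∀ k i, ∑ j, C i j * v k j = c i * ((1 - μ k) * v k i))
    (horth : ∀ k l, weightedInner c (v k) (v l) = if k = l then 1 else 0) (p : ι → ℝ) :
    quadForm C p = ∑ k, (1 - μ k) * weightedInner c p (v k) * weightedInner c p (v k) := by
  have hCp : ∀ i, ∑ j, C i j * p j =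
      ∑ k, ((1 - μ k) * weightedInner c p (v k)) * (c i * v k i) := by
    intro i
    conv_lhs => rw [← sum_weightedInner_mul_eq_self horth p]
    simp only [mul_sum]
    rw [sum_comm]
    refine sum_congr rfl fun k _ => ?_
    calc ∑ j, C i j * (weightedInner c p (v k) * v k j)
        = weightedInner c p (v k) * ∑ j, C i j * v k j := by
          rw [mul_sum]
          exact sum_congr rfl fun j _ => by ring
      _ = _ := by rw [heig]; ring
  calc quadForm C p
      = weightedInner c p (fun i => ∑ k, ((1 - μ k) * weightedInner c p (v k)) * v k i) := by
        simp only [quadForm, hCp, weightedInner, mul_sum]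
        exact sum_congr rfl fun i _ => sum_congr rfl fun k _ => by ring
    _ = _ := weightedInner_sum_mul_right p _

theorem mul_weightedInner_self_le_quadForm
    (heig : ∀ k i, ∑ j, C i j * v k j = c i * ((1 - μ k) * v k i))
    (horth : ∀ k l, weightedInner c (v k) (v l) = if k = l then 1 else 0)
    {M : ℝ} (hM : ∀ k, μ k ≤ M) (p : ι → ℝ) :
    (1 - M) * weightedInner c p p ≤ quadForm C p := by
  rw [quadForm_eq_sum heig horth, weightedInner_eq_sum_mul horth p p, mul_sum]
  refine sum_le_sum fun k _ => ?_
  rw [mul_assoc (1 - μ k)]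
  exact mul_le_mul_of_nonneg_right (by linarith [hM k]) (mul_self_nonneg _)

end Spectral

section TestVector

variable {ι : Type*} [Fintype ι] [DecidableEq ι] {c : ι → ℝ}

/-- `e_{i₀} - c_{i₀} 𝟙`, a multiple of the paper's unit test vector `p`. -/
def centeredIndicator (c : ι → ℝ) (i₀ j : ι) : ℝ := (if j = i₀ then 1 else 0) - c i₀

theorem weightedInner_centeredIndicator_self (htot : ∑ i, c i = 1) (i₀ : ι) :
    weightedInner c (centeredIndicator c i₀) (centeredIndicator c i₀) = c i₀ * (1 - c i₀) := by
  have hterm : ∀ j, c j * centeredIndicator c i₀ j * centeredIndicator c i₀ j =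
      (if j = i₀ then c j * (1 - 2 * c i₀) else 0) + c i₀ ^ 2 * c j := by
    intro j
    by_cases h : j = i₀ <;> simp only [centeredIndicator, h, ↓reduceIte] <;> ring
  simp only [weightedInner, hterm, sum_add_distrib, sum_ite_eq', mem_univ, if_true, ← mul_sum,
    htot]
  ring

theorem quadForm_centeredIndicator {C : ι → ι → ℝ} (hsym : ∀ i j, C i j = C j i)
    (hdiag : ∀ i, C i i = 0) (hc : ∀ i, c i = ∑ j, C i j) (htot : ∑ i, c i = 1) (i₀ : ι) :
    quadForm C (centeredIndicator c i₀) = -c i₀ ^ 2 := by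
  have hrow : ∀ i, ∑ j, C i j * centeredIndicator c i₀ j = C i i₀ - c i₀ * c i := by
    intro i
    simp only [centeredIndicator, mul_sub, mul_ite, mul_one, mul_zero, sum_sub_distrib,
      sum_ite_eq', mem_univ, ↓reduceIte, ← sum_mul, hc i]
    ring
  have hcol : ∑ i, C i i₀ = c i₀ := by simp only [hc i₀, hsym _ i₀]
  simp only [quadForm, hrow]
  simp only [centeredIndicator, sub_mul, ite_mul, one_mul, zero_mul, mul_sub, sum_sub_distrib,
    sum_ite_eq', mem_univ, if_true, ← mul_sum, hcol, htot, hdiag]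
  ring

end TestVector

/-- For a connected weighted network `C` on `d ≥ 2` vertices with unit
total weight, `max_i c_i ≤ γ`, where `γ = max (|1-λ_2|) (|1-λ_d|)` and `λ_2, λ_d`
are the second-smallest and largest eigenvalues of `Δ = I - D⁻¹C` with respect to
the weighted inner product. -/
theorem max_degree_le_gamma
    (d : ℕ) (hd : 2 ≤ d) (C : Fin d → Fin d → ℝ)
    (hsym : ∀ i j, C i j = C j i)
    (hdiag : ∀ i, C i i = 0)
    (c : Fin d → ℝ) (hc : ∀ i, c i = ∑ j, C i j)
    (hcpos : ∀ i, 0 < c i)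
    (htot : ∑ i, c i = 1)
    -- eigendecomposition of Δ with respect to the weighted inner product:
    (μ : Fin d → ℝ) (v : Fin d → Fin d → ℝ)
    (heig : ∀ k i, v k i - (∑ j, C i j * v k j) / c i = μ k * v k i)
    (horth : ∀ k l, (∑ i, c i * v k i * v l i) = if k = l then (1:ℝ) else 0)
    (hmono : Monotone μ)
    (gam : ℝ)
    (hgam : gam = max |1 - μ ⟨1, by omega⟩| |1 - μ ⟨d - 1, by omega⟩|) :
    ∀ i, c i ≤ gam := by
  intro i₀
  have heig' : ∀ k i, ∑ j, C i j * v k j = c i * ((1 - μ k) * v k i) := by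
    intro k i
    have := heig k i
    field_simp [(hcpos i).ne'] at this
    linarith
  set M := μ ⟨d - 1, by omega⟩
  have hM : ∀ k, μ k ≤ M := fun k => hmono (Fin.le_def.mpr (Nat.le_sub_one_of_lt k.isLt))
  have hM_le : M - 1 ≤ gam := hgam ▸ le_max_of_le_right (abs_sub_comm 1 M ▸ le_abs_self _)
  have hrayleigh := mul_weightedInner_self_le_quadForm heig' horth hM (centeredIndicator c i₀)
  rw [weightedInner_centeredIndicator_self htot,
    quadForm_centeredIndicator hsym hdiag hc htot] at hrayleigh
  have hc_le : c i₀ ≤ 1 := htot ▸ single_le_sum (fun i _ => (hcpos i).le) (mem_univ i₀)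
  have hcpos₀ := hcpos i₀
  have hkey : c i₀ ≤ (M - 1) * (1 - c i₀) := by nlinarith
  nlinarith
end

section
/- Let ε(σ², p) be a centered normal with variance σ² conditioned to [-p, 1-p]. For all σ > 0 and p ∈ [0, 1/2], the mean satisfies 0 ≤ E[ε(σ², p)] ≤ 2σ exp(-p²/(2σ²)). -/
/-!
Writing `g x = exp (-x² / (2σ²))`, the identity `(-σ² g)' = x g` gives the mean in closed form,
`σ² (g p - g (1 - p)) / Z` with `Z = ∫_{-p}^{1-p} g`. Since `p ≤ 1 - p` the numerator is
nonnegative. For the upper bound, `g ≥ 1/2` on `[0, σ]` gives `Z ≥ min σ (1 - p) / 2`, while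
`1 - e^{-t} ≤ t` bounds the numerator by `g p · min (σ², (1 - p)² / 2)`.
-/

open MeasureTheory

/-- The law of the truncated normal `ε(σ², p)`: a centered normal with variance `σ²`
conditioned to lie in `[-p, 1-p]`. -/
noncomputable def truncGaussLaw (σ p : ℝ) : Measure ℝ :=
  (volume.restrict (Set.Icc (-p) (1 - p))).withDensity
    (fun x => ENNReal.ofReal (Real.exp (-x ^ 2 / (2 * σ ^ 2)) /
      ∫ y in Set.Icc (-p) (1 - p), Real.exp (-y ^ 2 / (2 * σ ^ 2))))

noncomputable def gaussWeight (σ x : ℝ) : ℝ := Real.exp (-x ^ 2 / (2 * σ ^ 2))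

section gaussWeight

variable {σ : ℝ}

lemma gaussWeight_pos (σ x : ℝ) : 0 < gaussWeight σ x := Real.exp_pos _

@[simp]
lemma gaussWeight_neg (σ x : ℝ) : gaussWeight σ (-x) = gaussWeight σ x := by
  simp [gaussWeight]

@[fun_prop]
lemma continuous_gaussWeight (σ : ℝ) : Continuous (gaussWeight σ) := by
  unfold gaussWeight; fun_prop

lemma gaussWeight_le_of_sq_le {a b : ℝ} (h : a ^ 2 ≤ b ^ 2) :
    gaussWeight σ b ≤ gaussWeight σ a := by
  unfold gaussWeight
  gcongr

lemma half_le_gaussWeight {x : ℝ} (hx : x ^ 2 ≤ σ ^ 2) : 1 / 2 ≤ gaussWeight σ x := by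
  have hq : x ^ 2 / (2 * σ ^ 2) ≤ 1 / 2 := by
    rcases eq_or_ne σ 0 with rfl | hσ
    · simp
    · rw [div_le_iff₀ (by positivity)]
      linarith
  have := Real.add_one_le_exp (-x ^ 2 / (2 * σ ^ 2))
  rw [gaussWeight, neg_div]
  rw [neg_div] at this
  linarith

lemma gaussWeight_sub_le (a b : ℝ) :
    gaussWeight σ a - gaussWeight σ b ≤ gaussWeight σ a * ((b ^ 2 - a ^ 2) / (2 * σ ^ 2)) := by
  have hb : gaussWeight σ b = gaussWeight σ a * Real.exp (-((b ^ 2 - a ^ 2) / (2 * σ ^ 2))) := by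
    rw [gaussWeight, gaussWeight, ← Real.exp_add]
    ring_nf
  have := Real.add_one_le_exp (-((b ^ 2 - a ^ 2) / (2 * σ ^ 2)))
  rw [hb]
  nlinarith [gaussWeight_pos σ a]

lemma hasDerivAt_neg_sq_mul_gaussWeight (hσ : σ ≠ 0) (x : ℝ) :
    HasDerivAt (fun y => -σ ^ 2 * gaussWeight σ y) (x * gaussWeight σ x) x := by
  have h : HasDerivAt (fun y => -σ ^ 2 * gaussWeight σ y) _ x :=
    (((hasDerivAt_pow 2 x).neg.div_const (2 * σ ^ 2)).exp).const_mul (-σ ^ 2)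
  convert h using 1
  simp only [gaussWeight, Pi.neg_apply, neg_div]
  field_simp
  ring

lemma integral_mul_gaussWeight (hσ : σ ≠ 0) (a b : ℝ) :
    ∫ x in a..b, x * gaussWeight σ x = σ ^ 2 * (gaussWeight σ a - gaussWeight σ b) := by
  rw [intervalIntegral.integral_eq_sub_of_hasDerivAt
    (fun x _ => hasDerivAt_neg_sq_mul_gaussWeight hσ x)
    (by apply Continuous.intervalIntegrable; fun_prop)]
  ring

lemma sq_mul_gaussWeight_sub_le (hσ : 0 < σ) (a : ℝ) {b : ℝ} (hb : 0 ≤ b) :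
    σ ^ 2 * (gaussWeight σ a - gaussWeight σ b) ≤ σ * gaussWeight σ a * min σ b := by
  rcases le_total σ b with hσb | hbσ
  · rw [min_eq_left hσb]
    nlinarith [gaussWeight_pos σ b]
  · rw [min_eq_right hbσ]
    calc σ ^ 2 * (gaussWeight σ a - gaussWeight σ b)
        ≤ σ ^ 2 * (gaussWeight σ a * ((b ^ 2 - a ^ 2) / (2 * σ ^ 2))) := by
          gcongr; exact gaussWeight_sub_le a b
      _ = gaussWeight σ a * ((b ^ 2 - a ^ 2) / 2) := by field_simp
      _ ≤ gaussWeight σ a * (σ * b) :=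
          mul_le_mul_of_nonneg_left (by nlinarith [sq_nonneg a]) (gaussWeight_pos σ a).le
      _ = σ * gaussWeight σ a * b := by ring

lemma min_div_two_le_setIntegral_gaussWeight (hσ : 0 < σ) {a b : ℝ} (ha : a ≤ 0) (hb : 0 ≤ b) :
    min σ b / 2 ≤ ∫ x in Set.Icc a b, gaussWeight σ x := by
  set m := min σ b
  have hm : 0 ≤ m := le_min hσ.le hb
  have h_half : ∫ _ in (0 : ℝ)..m, (1 / 2 : ℝ) ≤ ∫ x in (0 : ℝ)..m, gaussWeight σ x := by
    refine intervalIntegral.integral_mono_on hm (by simp)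
      (by apply Continuous.intervalIntegrable; fun_prop) fun x hx => half_le_gaussWeight ?_
    have := hx.2.trans (min_le_left σ b)
    nlinarith [hx.1]
  have h_sub : ∫ x in Set.Icc 0 m, gaussWeight σ x ≤ ∫ x in Set.Icc a b, gaussWeight σ x :=
    setIntegral_mono_set (continuous_gaussWeight σ).integrableOn_Icc
      (.of_forall fun x => (gaussWeight_pos σ x).le)
      (.of_forall (Set.Icc_subset_Icc ha (min_le_right σ b)))
  rw [integral_Icc_eq_integral_Ioc, ← intervalIntegral.integral_of_le hm] at h_sub
  simp only [intervalIntegral.integral_const, smul_eq_mul, sub_zero] at h_half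
  linarith

end gaussWeight

lemma integral_id_truncGaussLaw {σ : ℝ} (hσ : σ ≠ 0) (p : ℝ) :
    ∫ x, x ∂(truncGaussLaw σ p) = σ ^ 2 * (gaussWeight σ p - gaussWeight σ (1 - p)) /
      ∫ y in Set.Icc (-p) (1 - p), gaussWeight σ y := by
  set Z := ∫ y in Set.Icc (-p) (1 - p), gaussWeight σ y
  have hZ : 0 ≤ Z := setIntegral_nonneg measurableSet_Icc fun x _ => (gaussWeight_pos σ x).le
  change ∫ x, x ∂(volume.restrict _).withDensity
    (fun x => ((gaussWeight σ x / Z).toNNReal : ENNReal)) = _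
  rw [integral_withDensity_eq_integral_smul (by fun_prop)]
  have hsmul : ∀ x, (gaussWeight σ x / Z).toNNReal • x = x * gaussWeight σ x / Z := fun x => by
    rw [NNReal.smul_def, Real.coe_toNNReal _ (div_nonneg (gaussWeight_pos σ x).le hZ), smul_eq_mul]
    ring
  simp_rw [hsmul]
  rw [integral_div, integral_Icc_eq_integral_Ioc, ← intervalIntegral.integral_of_le (by linarith),
    integral_mul_gaussWeight hσ, gaussWeight_neg]

/-- For all `σ > 0` and `p ∈ [0, 1/2]`, the mean of the truncated
normal satisfies `0 ≤ E[ε(σ², p)] ≤ 2σ exp(-p²/(2σ²))`. -/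
theorem truncGauss_mean_bounds (σ p : ℝ) (hσ : 0 < σ)
    (hp : p ∈ Set.Icc (0:ℝ) (1/2)) :
    0 ≤ ∫ x, x ∂(truncGaussLaw σ p) ∧
    ∫ x, x ∂(truncGaussLaw σ p) ≤ 2 * σ * Real.exp (-p ^ 2 / (2 * σ ^ 2)) := by
  obtain ⟨hp0, hp2⟩ := hp
  set Z := ∫ y in Set.Icc (-p) (1 - p), gaussWeight σ y
  have hZ : min σ (1 - p) / 2 ≤ Z :=
    min_div_two_le_setIntegral_gaussWeight hσ (neg_nonpos.2 hp0) (by linarith)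
  have hZpos : 0 < Z := by
    have : 0 < min σ (1 - p) := lt_min hσ (by linarith)
    linarith
  rw [integral_id_truncGaussLaw hσ.ne']
  constructor
  · have := gaussWeight_le_of_sq_le (σ := σ) (by nlinarith : p ^ 2 ≤ (1 - p) ^ 2)
    exact div_nonneg (mul_nonneg (sq_nonneg σ) (sub_nonneg.2 this)) hZpos.le
  · rw [div_le_iff₀ hZpos]
    calc σ ^ 2 * (gaussWeight σ p - gaussWeight σ (1 - p))
        ≤ σ * gaussWeight σ p * min σ (1 - p) := sq_mul_gaussWeight_sub_le hσ p (by linarith)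
      _ ≤ σ * gaussWeight σ p * (2 * Z) :=
        mul_le_mul_of_nonneg_left (by linarith) (mul_pos hσ (gaussWeight_pos σ p)).le
      _ = 2 * σ * gaussWeight σ p * Z := by ring
end

section
/- Let ε(σ², p) be a centered normal with variance σ² conditioned to [-p, 1-p]. For all σ > 0 and p ∈ [0,1], Var(ε(σ², p)) ≤ σ² and E[ε(σ², p)²] ≤ 5σ². -/
/-!
Integrating `(σ² - x²) e^{-x²/(2σ²)} = (d/dx) σ² x e^{-x²/(2σ²)}` over `[a, b]` gives the
boundary term `σ² b e^{-b²/(2σ²)} - σ² a e^{-a²/(2σ²)}`, which is nonnegative as soon as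
`a ≤ 0 ≤ b`. Hence the second moment of a centred Gaussian truncated to an interval containing
`0` is at most `σ²`, and the variance is at most the second moment.
-/

open MeasureTheory ProbabilityTheory

section WithDensity

variable {α : Type*} [MeasurableSpace α] {μ : Measure α}

theorem integral_withDensity_ofReal_div {f : α → ℝ} (hf : Measurable f) (hf0 : ∀ x, 0 ≤ f x)
    {Z : ℝ} (hZ : 0 ≤ Z) (g : α → ℝ) :
    ∫ x, g x ∂μ.withDensity (fun x => ENNReal.ofReal (f x / Z)) = (∫ x, f x * g x ∂μ) / Z := by
  rw [integral_withDensity_eq_integral_toReal_smul (by fun_prop)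
    (ae_of_all _ fun _ => ENNReal.ofReal_lt_top), ← integral_div]
  congr 1 with x
  rw [ENNReal.toReal_ofReal (div_nonneg (hf0 x) hZ), smul_eq_mul]
  ring

theorem isProbabilityMeasure_withDensity_ofReal_div_integral {f : α → ℝ} (hfi : Integrable f μ)
    (hf0 : 0 ≤ᵐ[μ] f) (hZ : 0 < ∫ x, f x ∂μ) :
    IsProbabilityMeasure (μ.withDensity fun x => ENNReal.ofReal (f x / ∫ y, f y ∂μ)) := by
  constructor
  rw [withDensity_apply _ MeasurableSet.univ, Measure.restrict_univ,
    ← ofReal_integral_eq_lintegral_ofReal (hfi.div_const _)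
      (hf0.mono fun _ hx => div_nonneg hx hZ.le),
    integral_div, div_self hZ.ne', ENNReal.ofReal_one]

end WithDensity

section GaussianWeight

open Real Set

variable {σ : ℝ}

theorem hasDerivAt_mul_exp_neg_sq_div (hσ : σ ≠ 0) (x : ℝ) :
    HasDerivAt (fun x => σ ^ 2 * x * exp (-x ^ 2 / (2 * σ ^ 2)))
      (σ ^ 2 * exp (-x ^ 2 / (2 * σ ^ 2)) - exp (-x ^ 2 / (2 * σ ^ 2)) * x ^ 2) x := by
  have hexp : HasDerivAt (fun x => exp (-x ^ 2 / (2 * σ ^ 2)))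
      (exp (-x ^ 2 / (2 * σ ^ 2)) * (-(2 * x) / (2 * σ ^ 2))) x := by
    simpa using ((hasDerivAt_pow 2 x).neg.div_const (2 * σ ^ 2)).exp
  refine (((hasDerivAt_id' x).const_mul (σ ^ 2)).mul hexp).congr_deriv ?_
  field_simp
  ring

theorem setIntegral_Icc_exp_neg_sq_div_mul_sq_le (hσ : σ ≠ 0) {a b : ℝ} (ha : a ≤ 0)
    (hb : 0 ≤ b) :
    ∫ x in Icc a b, exp (-x ^ 2 / (2 * σ ^ 2)) * x ^ 2 ≤
      σ ^ 2 * ∫ x in Icc a b, exp (-x ^ 2 / (2 * σ ^ 2)) := by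
  have hw : Continuous fun x : ℝ => exp (-x ^ 2 / (2 * σ ^ 2)) := by fun_prop
  have hFTC := intervalIntegral.integral_eq_sub_of_hasDerivAt
    (fun x _ => hasDerivAt_mul_exp_neg_sq_div hσ x)
    ((by fun_prop : Continuous fun x =>
      σ ^ 2 * exp (-x ^ 2 / (2 * σ ^ 2)) - exp (-x ^ 2 / (2 * σ ^ 2)) * x ^ 2).intervalIntegrable
        a b)
  rw [intervalIntegral.integral_sub ((hw.const_mul _).intervalIntegrable a b)
      ((by fun_prop : Continuous fun x => exp (-x ^ 2 / (2 * σ ^ 2)) * x ^ 2).intervalIntegrable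
        a b),
    intervalIntegral.integral_const_mul, intervalIntegral.integral_of_le (ha.trans hb),
    intervalIntegral.integral_of_le (ha.trans hb), ← integral_Icc_eq_integral_Ioc,
    ← integral_Icc_eq_integral_Ioc] at hFTC
  have hb_term : 0 ≤ σ ^ 2 * b * exp (-b ^ 2 / (2 * σ ^ 2)) := by positivity
  have ha_term : σ ^ 2 * a * exp (-a ^ 2 / (2 * σ ^ 2)) ≤ 0 :=
    mul_nonpos_of_nonpos_of_nonneg (mul_nonpos_of_nonneg_of_nonpos (sq_nonneg σ) ha)
      (exp_pos _).le
  linarith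

end GaussianWeight

/-- For all `σ > 0` and `p ∈ [0,1]`,
`Var(ε(σ², p)) ≤ σ²` and `E[ε(σ², p)²] ≤ 5σ²`. -/
theorem truncGauss_variance_upper_bounds (σ p : ℝ) (hσ : 0 < σ)
    (hp : p ∈ Set.Icc (0:ℝ) 1) :
    variance (fun x => x) (truncGaussLaw σ p) ≤ σ ^ 2 ∧
    ∫ x, x ^ 2 ∂(truncGaussLaw σ p) ≤ 5 * σ ^ 2 := by
  obtain ⟨hp0, hp1⟩ := hp
  have hw : Continuous fun x : ℝ => Real.exp (-x ^ 2 / (2 * σ ^ 2)) := by fun_prop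
  have hw0 : ∀ x : ℝ, 0 ≤ Real.exp (-x ^ 2 / (2 * σ ^ 2)) := fun _ => (Real.exp_pos _).le
  have : NeZero (volume.restrict (Set.Icc (-p) (1 - p))) :=
    ⟨by simp [Measure.restrict_eq_zero, Real.volume_Icc]⟩
  have hZ : 0 < ∫ y in Set.Icc (-p) (1 - p), Real.exp (-y ^ 2 / (2 * σ ^ 2)) :=
    integral_exp_pos hw.integrableOn_Icc
  have : IsProbabilityMeasure (truncGaussLaw σ p) :=
    isProbabilityMeasure_withDensity_ofReal_div_integral hw.integrableOn_Icc (ae_of_all _ hw0) hZ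
  have hsecond : ∫ x, x ^ 2 ∂(truncGaussLaw σ p) ≤ σ ^ 2 := by
    rw [truncGaussLaw, integral_withDensity_ofReal_div hw.measurable hw0 hZ.le, div_le_iff₀ hZ]
    exact setIntegral_Icc_exp_neg_sq_div_mul_sq_le hσ.ne' (by linarith) (by linarith)
  exact ⟨(variance_le_expectation_sq measurable_id.aestronglyMeasurable).trans hsecond,
    hsecond.trans (by linarith [sq_nonneg σ])⟩
end

section
/- There exists ρ ∈ (0,1) such that for all σ ≤ 1 and all p ∈ [0,1], the truncated normal ε(σ², p) (centered normal with variance σ² conditioned to [-p, 1-p]) satisfies Var(ε(σ², p)) ≥ ρσ². -/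
open MeasureTheory ProbabilityTheory Real Set

/-!
On the window `[-σ/2, σ/2]` the Gaussian kernel is at least `exp (-1/8)`, while its total mass is
`σ √(2π)`; so every subinterval of length `ℓ` of `[-p, 1-p] ∩ [-σ/2, σ/2]` carries probability at
least `exp (-1/8) ℓ / (σ √(2π))`. Since `σ ≤ 1`, the truncation interval contains a window of
length `σ/2` inside `[-σ/2, σ/2]`; its outer thirds are `σ/6` apart, so one of them lies at
distance `σ/12` from the mean, and Chebyshev's inequality turns its mass into a lower bound on
the variance.
-/

lemma mul_sq_le_variance_of_le_measure {Ω : Type*} [MeasurableSpace Ω] {μ : Measure Ω}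
    [IsFiniteMeasure μ] {X : Ω → ℝ} (hX : MemLp X 2 μ) {c δ q : ℝ} (hδ : 0 < δ)
    (hlo : ENNReal.ofReal q ≤ μ {ω | X ω ≤ c - δ})
    (hhi : ENNReal.ofReal q ≤ μ {ω | c + δ ≤ X ω}) :
    q * δ ^ 2 ≤ variance X μ := by
  have hfar : ENNReal.ofReal q ≤ μ {ω | δ ≤ |X ω - μ[X]|} := by
    rcases le_total μ[X] c with hm | hm
    · refine hhi.trans (measure_mono fun ω (hω : c + δ ≤ X ω) => ?_)
      exact show δ ≤ |X ω - μ[X]| from le_abs.mpr (Or.inl (by linarith))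
    · refine hlo.trans (measure_mono fun ω (hω : X ω ≤ c - δ) => ?_)
      exact show δ ≤ |X ω - μ[X]| from le_abs.mpr (Or.inr (by linarith))
  have hq := hfar.trans (meas_ge_le_variance_div_sq hX hδ)
  rw [ENNReal.ofReal_le_ofReal_iff (div_nonneg (variance_nonneg X μ) (sq_nonneg δ))] at hq
  rwa [le_div_iff₀ (by positivity)] at hq

lemma exists_Icc_subset_truncation_window {p w : ℝ} (hp : p ∈ Icc (0 : ℝ) 1) (hw : 0 ≤ w)
    (hw2 : w ≤ 1 / 2) :
    ∃ a, Icc a (a + w) ⊆ Icc (-p) (1 - p) ∧ Icc a (a + w) ⊆ Icc (-w) w := by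
  obtain ⟨hp0, hp1⟩ := hp
  rcases le_total p (1 / 2) with hp2 | hp2
  · exact ⟨0, Icc_subset_Icc (by linarith) (by linarith),
      Icc_subset_Icc (by linarith) (by linarith)⟩
  · exact ⟨-w, Icc_subset_Icc (by linarith) (by linarith),
      Icc_subset_Icc le_rfl (by linarith)⟩

noncomputable def gaussKernel (σ x : ℝ) : ℝ := exp (-x ^ 2 / (2 * σ ^ 2))

lemma gaussKernel_eq (σ x : ℝ) : gaussKernel σ x = exp (-(1 / (2 * σ ^ 2)) * x ^ 2) := by
  rw [gaussKernel, neg_div, neg_mul, one_div_mul_eq_div]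

lemma integrable_gaussKernel {σ : ℝ} (hσ : σ ≠ 0) : Integrable (gaussKernel σ) := by
  simp_rw [funext (gaussKernel_eq σ)]
  exact integrable_exp_neg_mul_sq (by positivity)

lemma integral_gaussKernel (σ : ℝ) : ∫ x, gaussKernel σ x = |σ| * √(2 * π) := by
  simp_rw [gaussKernel_eq, integral_gaussian, one_div, div_inv_eq_mul,
    show π * (2 * σ ^ 2) = σ ^ 2 * (2 * π) by ring, sqrt_mul (sq_nonneg σ), sqrt_sq_eq_abs]

lemma setIntegral_gaussKernel_le {σ : ℝ} (hσ : σ ≠ 0) (s : Set ℝ) :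
    ∫ x in s, gaussKernel σ x ≤ |σ| * √(2 * π) :=
  integral_gaussKernel σ ▸
    setIntegral_le_integral (integrable_gaussKernel hσ) (.of_forall fun _ => (exp_pos _).le)

lemma setIntegral_gaussKernel_Icc_pos {σ a b : ℝ} (hσ : σ ≠ 0) (hab : a < b) :
    0 < ∫ x in Icc a b, gaussKernel σ x := by
  rw [integral_Icc_eq_integral_Ioc, ← intervalIntegral.integral_of_le hab.le]
  exact intervalIntegral.intervalIntegral_pos_of_pos
    (integrable_gaussKernel hσ).intervalIntegrable (fun _ => exp_pos _) hab

lemma exp_neg_one_div_eight_le_gaussKernel {σ x : ℝ} (hx : |x| ≤ |σ| / 2) :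
    exp (-1 / 8) ≤ gaussKernel σ x := by
  have hx2 : x ^ 2 ≤ 1 / 8 * (2 * σ ^ 2) := by
    rw [← sq_abs x, ← sq_abs σ]
    nlinarith [abs_nonneg x]
  rw [gaussKernel, exp_le_exp, neg_div, neg_div, neg_le_neg_iff]
  exact div_le_of_le_mul₀ (by positivity) (by norm_num) hx2

lemma truncGaussLaw_eq (σ p : ℝ) :
    truncGaussLaw σ p = (volume.restrict (Icc (-p) (1 - p))).withDensity
      (fun x => ENNReal.ofReal (gaussKernel σ x / ∫ y in Icc (-p) (1 - p), gaussKernel σ y)) :=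
  rfl

lemma isProbabilityMeasure_truncGaussLaw {σ : ℝ} (hσ : σ ≠ 0) (p : ℝ) :
    IsProbabilityMeasure (truncGaussLaw σ p) := by
  have hC := setIntegral_gaussKernel_Icc_pos hσ (show -p < 1 - p by linarith)
  constructor
  rw [truncGaussLaw_eq, withDensity_apply _ MeasurableSet.univ, Measure.restrict_univ,
    ← ofReal_integral_eq_lintegral_ofReal
      ((integrable_gaussKernel hσ).div_const _).integrableOn
      (.of_forall fun x => div_nonneg (exp_pos _).le hC.le),
    integral_div, div_self hC.ne', ENNReal.ofReal_one]

lemma ae_mem_Icc_truncGaussLaw (σ p : ℝ) :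
    ∀ᵐ x ∂truncGaussLaw σ p, x ∈ Icc (-p) (1 - p) :=
  (withDensity_absolutelyContinuous _ _).ae_le (ae_restrict_mem measurableSet_Icc)

lemma memLp_id_truncGaussLaw {σ : ℝ} (hσ : σ ≠ 0) (p : ℝ) :
    MemLp (fun x => x) 2 (truncGaussLaw σ p) :=
  have := isProbabilityMeasure_truncGaussLaw hσ p
  memLp_of_bounded (ae_mem_Icc_truncGaussLaw σ p) aestronglyMeasurable_id 2

lemma ofReal_mul_volume_le_truncGaussLaw {σ p k : ℝ} {s : Set ℝ} (hs : MeasurableSet s)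
    (hsI : s ⊆ Icc (-p) (1 - p)) (hk : ∀ x ∈ s, k ≤ gaussKernel σ x) :
    ENNReal.ofReal (k / ∫ y in Icc (-p) (1 - p), gaussKernel σ y) * volume s ≤
      truncGaussLaw σ p s := by
  have hC : 0 ≤ ∫ y in Icc (-p) (1 - p), gaussKernel σ y :=
    setIntegral_nonneg measurableSet_Icc fun _ _ => (exp_pos _).le
  rw [truncGaussLaw_eq, withDensity_apply _ hs, Measure.restrict_restrict hs,
    inter_eq_self_of_subset_left hsI, ← setLIntegral_const]
  exact setLIntegral_mono' hs fun x hx =>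
    ENNReal.ofReal_le_ofReal (div_le_div_of_nonneg_right (hk x hx) hC)

lemma truncGaussLaw_ge_of_subset_window {σ p : ℝ} (hσ : 0 < σ) {s : Set ℝ}
    (hs : MeasurableSet s) (hsI : s ⊆ Icc (-p) (1 - p)) (hsσ : ∀ x ∈ s, |x| ≤ σ / 2) :
    ENNReal.ofReal (exp (-1 / 8) / (σ * √(2 * π))) * volume s ≤ truncGaussLaw σ p s := by
  have hC := setIntegral_gaussKernel_Icc_pos hσ.ne' (show -p < 1 - p by linarith)
  have hCle := abs_of_pos hσ ▸ setIntegral_gaussKernel_le hσ.ne' (Icc (-p) (1 - p))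
  refine le_trans ?_ (ofReal_mul_volume_le_truncGaussLaw hs hsI fun x hx =>
    exp_neg_one_div_eight_le_gaussKernel (by rw [abs_of_pos hσ]; exact hsσ x hx))
  gcongr

/-- There exists `ρ ∈ (0,1)` such that for all `0 < σ ≤ 1` and all
`p ∈ [0,1]`, `Var(ε(σ², p)) ≥ ρσ²`. -/
theorem truncGauss_variance_lower_bound :
    ∃ ρ ∈ Set.Ioo (0:ℝ) 1, ∀ σ p : ℝ, 0 < σ → σ ≤ 1 → p ∈ Set.Icc (0:ℝ) 1 →
      ρ * σ ^ 2 ≤ variance (fun x => x) (truncGaussLaw σ p) := by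
  set q := exp (-1 / 8) / (6 * √(2 * π)) with hq
  refine ⟨q / 144, ⟨by positivity, ?_⟩, fun σ p hσ hσ1 hp => ?_⟩
  · have hexp : exp (-1 / 8) ≤ 1 := exp_le_one_iff.mpr (by norm_num)
    have hsqrt : 1 ≤ √(2 * π) := one_le_sqrt.mpr (by linarith [pi_gt_three])
    rw [hq, div_div, div_lt_one (by positivity)]
    linarith
  obtain ⟨a, haI, haσ⟩ :=
    exists_Icc_subset_truncation_window hp (w := σ / 2) (by positivity) (by linarith)
  have := isProbabilityMeasure_truncGaussLaw hσ.ne' p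
  have hmass : ∀ u, Icc u (u + σ / 6) ⊆ Icc a (a + σ / 2) →
      ENNReal.ofReal q ≤ truncGaussLaw σ p (Icc u (u + σ / 6)) := by
    intro u hu
    convert truncGaussLaw_ge_of_subset_window hσ measurableSet_Icc (hu.trans haI)
      (fun x hx => abs_le.mpr (haσ (hu hx))) using 1
    rw [volume_Icc, add_sub_cancel_left, ← ENNReal.ofReal_mul (by positivity), hq]
    field_simp
  calc q / 144 * σ ^ 2 = q * (σ / 12) ^ 2 := by ring
    _ ≤ _ := mul_sq_le_variance_of_le_measure (memLp_id_truncGaussLaw hσ.ne' p)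
      (c := a + σ / 4) (by positivity)
      ((hmass a (Icc_subset_Icc le_rfl (by linarith))).trans
        (measure_mono fun x hx => show x ≤ _ by linarith [hx.2]))
      ((hmass (a + σ / 3) (Icc_subset_Icc (by linarith) (by linarith))).trans
        (measure_mono fun x hx => show _ ≤ x by linarith [hx.1]))
end

section
/- For all x ≥ 0, the standard normal density f and CDF F satisfy x f(x)/F(x) + (f(x)/F(x))² < 1; equivalently, 1 - x f(x)/F(x) - (f(x)/F(x))² > 0. -/
/-!
Since `F(x) ≥ F(0) = 1/2` by symmetry of `f`, the ratio `r = f(x)/F(x)` is at most `2 f(x)` for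
`x ≥ 0`. By AM-GM, `x r ≤ x² r² + 1/4`, so `x r + r² ≤ (1 + x²) r² + 1/4 ≤ (2/π) (1 + x²) e^{-x²} + 1/4`,
and `(1 + x²) e^{-x²} ≤ 1` leaves `2/π + 1/4 < 1`.
-/

open Real MeasureTheory ProbabilityTheory Set

theorem two_smul_integral_Iic_zero_of_even {E : Type*} [NormedAddCommGroup E] [NormedSpace ℝ E]
    {g : ℝ → E} (hg : ∀ t, g (-t) = g t) (hint : Integrable g) :
    2 • ∫ t in Iic 0, g t = ∫ t, g t := by
  have h_refl : ∫ t in Iic 0, g t = ∫ t in Ioi 0, g t := by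
    simpa only [hg, neg_zero] using integral_comp_neg_Iic 0 g
  rw [two_nsmul, ← intervalIntegral.integral_Iic_add_Ioi hint.integrableOn hint.integrableOn,
    h_refl]

theorem half_le_integral_Iic_gaussianPDFReal {v : NNReal} (hv : v ≠ 0) {x : ℝ} (hx : 0 ≤ x) :
    1 / 2 ≤ ∫ t in Iic x, gaussianPDFReal 0 v t := by
  have h_even : ∀ t, gaussianPDFReal 0 v (-t) = gaussianPDFReal 0 v t := by
    simp [gaussianPDFReal]
  have h_half : ∫ t in Iic 0, gaussianPDFReal 0 v t = 1 / 2 := by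
    have := two_smul_integral_Iic_zero_of_even h_even (integrable_gaussianPDFReal 0 v)
    rw [integral_gaussianPDFReal_eq_one 0 hv, two_nsmul] at this
    linarith
  rw [← h_half]
  exact setIntegral_mono_set (integrable_gaussianPDFReal 0 v).integrableOn
    (ae_of_all _ (gaussianPDFReal_nonneg 0 v)) (ae_of_all _ (Iic_subset_Iic.mpr hx))

theorem one_add_mul_exp_neg_le_one (t : ℝ) : (1 + t) * exp (-t) ≤ 1 := by
  rw [exp_neg, mul_inv_le_iff₀ (exp_pos t), one_mul, add_comm]
  exact add_one_le_exp t

/-- For all `x ≥ 0`, the standard normal density `f` and CDF `F`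
satisfy `x f(x)/F(x) + (f(x)/F(x))² < 1`. -/
theorem gaussian_hazard_inequality
    (f F : ℝ → ℝ)
    (hf : ∀ x, f x = (Real.sqrt (2 * π))⁻¹ * Real.exp (-x ^ 2 / 2))
    (hF : ∀ x, F x = ∫ t in Set.Iic x, f t)
    (x : ℝ) (hx : 0 ≤ x) :
    x * (f x / F x) + (f x / F x) ^ 2 < 1 := by
  have hf_eq : f = gaussianPDFReal 0 1 := by
    ext t; simp [hf, gaussianPDFReal]
  have hF_half : 1 / 2 ≤ F x := by
    rw [hF, hf_eq]; exact half_le_integral_Iic_gaussianPDFReal one_ne_zero hx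
  have hfx : 0 < f x := by rw [hf_eq]; exact gaussianPDFReal_pos 0 1 x one_ne_zero
  set r := f x / F x
  have hr_nonneg : 0 ≤ r := div_nonneg hfx.le (by linarith)
  have hr_le : r ≤ 2 * f x := by
    rw [div_le_iff₀ (by linarith)]; nlinarith
  have h_sq : (2 * f x) ^ 2 = 2 / π * exp (-x ^ 2) := by
    rw [hf, mul_pow, mul_pow, inv_pow, sq_sqrt (by positivity), ← exp_nat_mul]
    field_simp
    ring_nf
  calc x * r + r ^ 2 ≤ r ^ 2 * (1 + x ^ 2) + 1 / 4 := by nlinarith [sq_nonneg (x * r - 1 / 2)]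
    _ ≤ (2 * f x) ^ 2 * (1 + x ^ 2) + 1 / 4 := by gcongr
    _ = 2 / π * ((1 + x ^ 2) * exp (-x ^ 2)) + 1 / 4 := by rw [h_sq]; ring
    _ ≤ 2 / π * 1 + 1 / 4 := by gcongr; exact one_add_mul_exp_neg_le_one _
    _ < 2 / 3 * 1 + 1 / 4 := by gcongr; exact pi_gt_three
    _ < 1 := by norm_num
end

section
/- Fix σ ∈ (0, ∞) and let Γ(p, ·) be the inverse CDF of the random variable p + ε(σ², p) on [0,1], where ε(σ², p) is the centered truncated normal on [-p, 1-p]. Then for all p, u ∈ [0,1], the partial derivative ∂Γ/∂p (p, u) lies in [0, 1]. -/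
/-!
Both `Γ(p, u)` and `p - Γ(p, u)` are nondecreasing in `p`, so every difference quotient of
`Γ(·, u)` lies in `[0, 1]`. Monotonicity of `Γ` is the stochastic ordering of the truncated
normal laws in their mean, which follows from the monotone likelihood ratio of the Gaussian
location family. Monotonicity of `p - Γ` says that raising the mean by `Δ` moves a quantile by
at most `Δ`: under a fixed density, the conditional mass of `[0, t]` in the window `[0, 1]`
is at most that of `[-Δ, t]` in the shifted window `[-Δ, 1 - Δ]`.
-/

open Real MeasureTheory ProbabilityTheory intervalIntegral Set Filter
open scoped NNReal

section IntervalIntegral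

variable {a b : ℝ → ℝ} {l v r : ℝ}

theorem integral_strictMono_of_pos (hb : Continuous b) (hb_pos : ∀ x, 0 < b x) :
    StrictMono fun t => ∫ x in l..t, b x := by
  intro s t hst
  have hsplit := integral_interval_sub_left (μ := volume) (hb.intervalIntegrable l t)
    (hb.intervalIntegrable l s)
  have hpos : 0 < ∫ x in s..t, b x :=
    intervalIntegral_pos_of_pos (hb.intervalIntegrable s t) hb_pos hst
  dsimp only
  linarith

theorem integral_mul_integral_le_of_ratio_monotone (ha : Continuous a) (hb : Continuous b)
    (hb_pos : ∀ x, 0 < b x) (hab : ∀ x y, x ≤ y → a x * b y ≤ a y * b x)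
    (hlv : l ≤ v) (hvr : v ≤ r) :
    (∫ x in l..v, a x) * ∫ x in l..r, b x ≤ (∫ x in l..v, b x) * ∫ x in l..r, a x := by
  -- On either side of `v` the ratio `a / b` is compared with its value `ρ` at `v`.
  set ρ := a v / b v
  have hleft : ∫ x in l..v, a x ≤ ρ * ∫ x in l..v, b x := by
    rw [← intervalIntegral.integral_const_mul]
    refine integral_mono_on hlv (ha.intervalIntegrable l v)
      ((hb.intervalIntegrable l v).const_mul ρ) fun x hx => ?_
    rw [div_mul_eq_mul_div, le_div_iff₀ (hb_pos v)]
    exact hab x v hx.2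
  have hright : ρ * ∫ x in v..r, b x ≤ ∫ x in v..r, a x := by
    rw [← intervalIntegral.integral_const_mul]
    refine integral_mono_on hvr ((hb.intervalIntegrable v r).const_mul ρ)
      (ha.intervalIntegrable v r) fun y hy => ?_
    rw [div_mul_eq_mul_div, div_le_iff₀ (hb_pos v)]
    exact hab v y hy.1
  have hb_left : 0 ≤ ∫ x in l..v, b x := integral_nonneg hlv fun x _ => (hb_pos x).le
  have hb_right : 0 ≤ ∫ x in v..r, b x := integral_nonneg hvr fun x _ => (hb_pos x).le
  rw [← integral_add_adjacent_intervals (hb.intervalIntegrable l v) (hb.intervalIntegrable v r),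
    ← integral_add_adjacent_intervals (ha.intervalIntegrable l v) (ha.intervalIntegrable v r)]
  nlinarith [mul_le_mul_of_nonneg_right hleft hb_right, mul_le_mul_of_nonneg_left hright hb_left]

theorem integral_mul_integral_le_of_shift (hb : Continuous b) (hb_nonneg : ∀ x, 0 ≤ b x)
    {Δ : ℝ} (hΔ : 0 ≤ Δ) (hlv : l ≤ v) (hvr : v + Δ ≤ r) :
    (∫ x in l..v, b x) * ∫ x in (l - Δ)..(r - Δ), b x ≤
      (∫ x in (l - Δ)..v, b x) * ∫ x in l..r, b x := by
  -- With `L, M, N, P` the masses of `[l - Δ, l]`, `[l, v]`, `[v, r - Δ]`, `[r - Δ, r]`, this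
  -- reads `M (L + M + N) ≤ (L + M) (M + N + P)`.
  have hI : ∀ s t, IntervalIntegrable b volume s t := hb.intervalIntegrable
  have h₁ : 0 ≤ ∫ x in (l - Δ)..l, b x := integral_nonneg (by linarith) fun x _ => hb_nonneg x
  have h₂ : 0 ≤ ∫ x in l..v, b x := integral_nonneg hlv fun x _ => hb_nonneg x
  have h₃ : 0 ≤ ∫ x in v..(r - Δ), b x := integral_nonneg (by linarith) fun x _ => hb_nonneg x
  have h₄ : 0 ≤ ∫ x in (r - Δ)..r, b x := integral_nonneg (by linarith) fun x _ => hb_nonneg x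
  rw [← integral_add_adjacent_intervals (hI (l - Δ) l) (hI l (r - Δ)),
    ← integral_add_adjacent_intervals (hI l v) (hI v (r - Δ)),
    ← integral_add_adjacent_intervals (hI (l - Δ) l) (hI l v),
    ← integral_add_adjacent_intervals (hI l (r - Δ)) (hI (r - Δ) r),
    ← integral_add_adjacent_intervals (hI l v) (hI v (r - Δ))]
  nlinarith [mul_nonneg h₁ h₃, mul_nonneg h₁ h₄, mul_nonneg h₂ h₄]

theorem integral_Iic_add_integral_Iic_sub_one_of_even (ha : Integrable a)
    (ha_even : ∀ x, a (-x) = a x) (ha_one : ∫ x, a x = 1) (s t : ℝ) :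
    (∫ x in Iic t, a x) + (∫ x in Iic s, a x) - 1 = ∫ x in -s..t, a x := by
  have hsplit : (∫ x in Iic (-s), a x) + ∫ x in Ioi (-s), a x = 1 := by
    rw [integral_Iic_add_Ioi ha.integrableOn ha.integrableOn, ha_one]
  have hreflect : ∫ x in Ioi (-s), a x = ∫ x in Iic s, a x := by
    rw [← neg_neg s, ← integral_comp_neg_Ioi, neg_neg]
    simp only [ha_even]
  rw [← integral_Iic_sub_Iic ha.integrableOn ha.integrableOn]
  linarith

end IntervalIntegral

section Gaussian

theorem continuous_gaussianPDFReal (μ : ℝ) (v : ℝ≥0) : Continuous (gaussianPDFReal μ v) := by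
  unfold gaussianPDFReal
  fun_prop

theorem gaussianPDFReal_zero_neg (v : ℝ≥0) (x : ℝ) :
    gaussianPDFReal 0 v (-x) = gaussianPDFReal 0 v x := by
  simp [gaussianPDFReal]

theorem gaussianPDFReal_zero_one_div {σ : ℝ} (hσ : 0 < σ) (μ x : ℝ) :
    gaussianPDFReal 0 1 ((x - μ) / σ) = σ * gaussianPDFReal μ ⟨σ ^ 2, sq_nonneg σ⟩ x := by
  rw [div_eq_inv_mul, gaussianPDFReal_inv_mul hσ.ne', abs_of_pos hσ, mul_zero, mul_one,
    gaussianPDFReal_sub, zero_add]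
  rfl

theorem gaussianPDFReal_mul_le_mul {μ₁ μ₂ : ℝ} (v : ℝ≥0) (hμ : μ₁ ≤ μ₂) {x y : ℝ} (hxy : x ≤ y) :
    gaussianPDFReal μ₂ v x * gaussianPDFReal μ₁ v y ≤
      gaussianPDFReal μ₂ v y * gaussianPDFReal μ₁ v x := by
  simp only [gaussianPDFReal, mul_mul_mul_comm _ (rexp _), ← exp_add, ← add_div]
  gcongr _ * rexp (?_ / _)
  nlinarith [mul_nonneg (sub_nonneg.2 hxy) (sub_nonneg.2 hμ)]

end Gaussian

section TruncatedGaussian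

noncomputable def truncatedGaussianCDF (μ : ℝ) (v : ℝ≥0) (t : ℝ) : ℝ :=
  (∫ x in 0..t, gaussianPDFReal μ v x) / ∫ x in 0..1, gaussianPDFReal μ v x

variable {v : ℝ≥0}

theorem integral_gaussianPDFReal_zero_one_pos (μ : ℝ) (hv : v ≠ 0) :
    0 < ∫ x in 0..1, gaussianPDFReal μ v x :=
  intervalIntegral_pos_of_pos ((continuous_gaussianPDFReal μ v).intervalIntegrable 0 1)
    (gaussianPDFReal_pos μ v · hv) zero_lt_one

theorem truncatedGaussianCDF_strictMono (μ : ℝ) (hv : v ≠ 0) :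
    StrictMono (truncatedGaussianCDF μ v) :=
  (integral_strictMono_of_pos (continuous_gaussianPDFReal μ v)
    (gaussianPDFReal_pos μ v · hv)).div_const (integral_gaussianPDFReal_zero_one_pos μ hv)

theorem truncatedGaussianCDF_le_of_le {μ₁ μ₂ : ℝ} (hv : v ≠ 0) (hμ : μ₁ ≤ μ₂) {t : ℝ}
    (ht : t ∈ Icc (0 : ℝ) 1) : truncatedGaussianCDF μ₂ v t ≤ truncatedGaussianCDF μ₁ v t := by
  rw [truncatedGaussianCDF, truncatedGaussianCDF, div_le_div_iff₀
    (integral_gaussianPDFReal_zero_one_pos μ₂ hv) (integral_gaussianPDFReal_zero_one_pos μ₁ hv)]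
  exact integral_mul_integral_le_of_ratio_monotone (continuous_gaussianPDFReal μ₂ v)
    (continuous_gaussianPDFReal μ₁ v) (gaussianPDFReal_pos μ₁ v · hv)
    (fun _ _ => gaussianPDFReal_mul_le_mul v hμ) ht.1 ht.2

theorem truncatedGaussianCDF_le_add_sub {μ₁ μ₂ : ℝ} (hv : v ≠ 0) (hμ : μ₁ ≤ μ₂) {t : ℝ}
    (ht₀ : 0 ≤ t) (ht₁ : t + (μ₂ - μ₁) ≤ 1) :
    truncatedGaussianCDF μ₁ v t ≤ truncatedGaussianCDF μ₂ v (t + (μ₂ - μ₁)) := by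
  have htranslate : ∀ s, ∫ x in 0..s, gaussianPDFReal μ₂ v x =
      ∫ x in (0 - (μ₂ - μ₁))..(s - (μ₂ - μ₁)), gaussianPDFReal μ₁ v x := fun s => by
    rw [← integral_comp_sub_right]
    simp only [gaussianPDFReal_sub, add_sub_cancel]
  rw [truncatedGaussianCDF, truncatedGaussianCDF, div_le_div_iff₀
    (integral_gaussianPDFReal_zero_one_pos μ₁ hv) (integral_gaussianPDFReal_zero_one_pos μ₂ hv),
    htranslate, htranslate, add_sub_cancel_right]
  exact integral_mul_integral_le_of_shift (continuous_gaussianPDFReal μ₁ v)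
    (gaussianPDFReal_nonneg μ₁ v) (sub_nonneg.2 hμ) ht₀ ht₁

theorem div_integral_Iic_eq_truncatedGaussianCDF {σ : ℝ} (hσ : 0 < σ) (q t : ℝ) :
    (∫ x in 0..t, gaussianPDFReal 0 1 ((x - q) / σ)) /
        ((∫ x in Iic ((1 - q) / σ), gaussianPDFReal 0 1 x) +
          (∫ x in Iic (q / σ), gaussianPDFReal 0 1 x) - 1) =
      σ * truncatedGaussianCDF q ⟨σ ^ 2, sq_nonneg σ⟩ t := by
  have hmass : ∫ x in (-(q / σ))..((1 - q) / σ), gaussianPDFReal 0 1 x =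
      ∫ x in 0..1, gaussianPDFReal q ⟨σ ^ 2, sq_nonneg σ⟩ x :=
    calc ∫ x in (-(q / σ))..((1 - q) / σ), gaussianPDFReal 0 1 x
        = σ⁻¹ • ∫ x in 0..1, gaussianPDFReal 0 1 (x / σ - q / σ) := by
          rw [inv_smul_integral_comp_div_sub]
          congr 1 <;> ring
      _ = ∫ x in 0..1, gaussianPDFReal q ⟨σ ^ 2, sq_nonneg σ⟩ x := by
          simp only [← sub_div, gaussianPDFReal_zero_one_div hσ,
            intervalIntegral.integral_const_mul, smul_eq_mul, inv_mul_cancel_left₀ hσ.ne']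
  rw [integral_Iic_add_integral_Iic_sub_one_of_even (integrable_gaussianPDFReal 0 1)
    (gaussianPDFReal_zero_neg 1) (integral_gaussianPDFReal_eq_one 0 one_ne_zero), hmass]
  simp only [gaussianPDFReal_zero_one_div hσ, intervalIntegral.integral_const_mul]
  exact mul_div_assoc _ _ _

end TruncatedGaussian

section Quantile

variable {Φ Γ : ℝ → ℝ → ℝ} {s : Set ℝ} {u : ℝ}

theorem monotoneOn_of_rightInverse (hΦ : ∀ q ∈ s, StrictMonoOn (Φ q) (Icc 0 1))
    (hΓ : ∀ q ∈ s, Γ q u ∈ Icc 0 1) (hΦΓ : ∀ q ∈ s, Φ q (Γ q u) = u)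
    (hdom : ∀ q₁ ∈ s, ∀ q₂ ∈ s, q₁ ≤ q₂ → ∀ t ∈ Icc (0 : ℝ) 1, Φ q₂ t ≤ Φ q₁ t) :
    MonotoneOn (fun q => Γ q u) s := by
  intro q₁ hq₁ q₂ hq₂ hq
  refine ((hΦ q₁ hq₁).le_iff_le (hΓ q₁ hq₁) (hΓ q₂ hq₂)).1 ?_
  calc Φ q₁ (Γ q₁ u) = Φ q₂ (Γ q₂ u) := by rw [hΦΓ q₁ hq₁, hΦΓ q₂ hq₂]
    _ ≤ Φ q₁ (Γ q₂ u) := hdom q₁ hq₁ q₂ hq₂ hq _ (hΓ q₂ hq₂)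

theorem monotoneOn_sub_of_rightInverse (hΦ : ∀ q ∈ s, StrictMonoOn (Φ q) (Icc 0 1))
    (hΓ : ∀ q ∈ s, Γ q u ∈ Icc 0 1) (hΦΓ : ∀ q ∈ s, Φ q (Γ q u) = u)
    (hshift : ∀ q₁ ∈ s, ∀ q₂ ∈ s, q₁ ≤ q₂ → ∀ t, 0 ≤ t → t + (q₂ - q₁) ≤ 1 →
      Φ q₁ t ≤ Φ q₂ (t + (q₂ - q₁))) :
    MonotoneOn (fun q => q - Γ q u) s := by
  intro q₁ hq₁ q₂ hq₂ hq
  suffices Γ q₂ u ≤ Γ q₁ u + (q₂ - q₁) by dsimp only; linarith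
  rcases le_or_gt (Γ q₁ u + (q₂ - q₁)) 1 with hle | hgt
  · have hmem : Γ q₁ u + (q₂ - q₁) ∈ Icc (0 : ℝ) 1 := ⟨by linarith [(hΓ q₁ hq₁).1], hle⟩
    refine ((hΦ q₂ hq₂).le_iff_le (hΓ q₂ hq₂) hmem).1 ?_
    calc Φ q₂ (Γ q₂ u) = Φ q₁ (Γ q₁ u) := by rw [hΦΓ q₁ hq₁, hΦΓ q₂ hq₂]
      _ ≤ Φ q₂ (Γ q₁ u + (q₂ - q₁)) := hshift q₁ hq₁ q₂ hq₂ hq _ (hΓ q₁ hq₁).1 hle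
  · exact (hΓ q₂ hq₂).2.trans hgt.le

end Quantile

theorem HasDerivWithinAt.mem_Icc_of_monotoneOn {G : ℝ → ℝ} {g p : ℝ} {s : Set ℝ}
    (hp : AccPt p (𝓟 s)) (hd : HasDerivWithinAt G g s p) (hG : MonotoneOn G s)
    (hG' : MonotoneOn (fun q => q - G q) s) : g ∈ Icc (0 : ℝ) 1 :=
  ⟨hd.nonneg_of_monotoneOn hp hG,
    sub_nonneg.1 (((hasDerivWithinAt_id p s).sub hd).nonneg_of_monotoneOn hp hG')⟩

/-- Fix `σ ∈ (0,∞)` and let `Γ(p, ·)` be the inverse CDF of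
`X_p = p + ε(σ², p)` on `[0,1]`, where the CDF is
`Φ(p,u) = (∫₀ᵘ f((x-p)/σ) dx) / (F((1-p)/σ) + F(p/σ) - 1)`
with `f, F` the standard normal density and CDF. Then for all `p, u ∈ [0,1]`,
`∂Γ/∂p (p,u) ∈ [0,1]`. -/
theorem inverse_cdf_derivative_in_unit_interval
    (σ : ℝ) (hσ : 0 < σ)
    (f F : ℝ → ℝ)
    (hf : ∀ x, f x = (Real.sqrt (2 * π))⁻¹ * Real.exp (-x ^ 2 / 2))
    (hF : ∀ x, F x = ∫ t in Set.Iic x, f t)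
    (Φ : ℝ → ℝ → ℝ)
    (hΦ : ∀ p u, Φ p u =
      (∫ x in (0:ℝ)..u, f ((x - p) / σ)) / (F ((1 - p) / σ) + F (p / σ) - 1))
    (Γ : ℝ → ℝ → ℝ)
    (hΓrange : ∀ p ∈ Set.Icc (0:ℝ) 1, ∀ u ∈ Set.Icc (0:ℝ) 1,
      Γ p u ∈ Set.Icc (0:ℝ) 1)
    (hΓinv : ∀ p ∈ Set.Icc (0:ℝ) 1, ∀ u ∈ Set.Icc (0:ℝ) 1,
      Φ p (Γ p u) = u) :
    ∀ p ∈ Set.Icc (0:ℝ) 1, ∀ u ∈ Set.Icc (0:ℝ) 1, ∀ g : ℝ,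
      HasDerivAt (fun p' => Γ p' u) g p → g ∈ Set.Icc (0:ℝ) 1 := by
  intro p hp u hu g hg
  obtain rfl : f = gaussianPDFReal 0 1 := funext fun x => by simp [hf, gaussianPDFReal]
  obtain rfl : F = fun x => ∫ t in Iic x, gaussianPDFReal 0 1 t := funext hF
  set v : ℝ≥0 := ⟨σ ^ 2, sq_nonneg σ⟩
  have hv : v ≠ 0 := by
    rw [← NNReal.coe_ne_zero]
    exact pow_ne_zero 2 hσ.ne'
  have hΦσ : ∀ q, Φ q = fun t => σ * truncatedGaussianCDF q v t := fun q => funext fun t =>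
    (hΦ q t).trans (div_integral_Iic_eq_truncatedGaussianCDF hσ q t)
  have hstrict : ∀ q ∈ Icc (0 : ℝ) 1, StrictMonoOn (Φ q) (Icc 0 1) := fun q _ => by
    simpa only [hΦσ] using ((truncatedGaussianCDF_strictMono q hv).const_mul hσ).strictMonoOn _
  have hmono := monotoneOn_of_rightInverse hstrict (hΓrange · · u hu) (hΓinv · · u hu)
    fun q₁ _ q₂ _ hq t ht => by
      simpa only [hΦσ] using
        mul_le_mul_of_nonneg_left (truncatedGaussianCDF_le_of_le hv hq ht) hσ.le
  have hsub := monotoneOn_sub_of_rightInverse hstrict (hΓrange · · u hu) (hΓinv · · u hu)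
    fun q₁ _ q₂ _ hq t ht₀ ht₁ => by
      simpa only [hΦσ] using
        mul_le_mul_of_nonneg_left (truncatedGaussianCDF_le_add_sub hv hq ht₀ ht₁) hσ.le
  have hacc : AccPt p (𝓟 (Icc (0 : ℝ) 1)) := isPreconnected_Icc.preperfect_of_nontrivial
    ⟨0, left_mem_Icc.2 zero_le_one, 1, right_mem_Icc.2 zero_le_one, zero_ne_one⟩ p hp
  exact hg.hasDerivWithinAt.mem_Icc_of_monotoneOn hacc hmono hsub
end

section
/- Monotone contractive coupling: Fix δ > 0, σ ∈ (0, ∞], and p, q ∈ [0,1] with 0 ≤ p - q ≤ δ. Then there exists a coupling of X_p ~ p + ε(σ², p) and X_q ~ q + ε(σ², q) such that almost surely 0 ≤ X_p - X_q ≤ δ. -/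
/-!
`X_q`, `X_p` and `X_p - (p - q) ~ q + ε(σ², p)` all have Gaussian densities cut off to a unit
window. From `X_p - (p - q)` to `X_q` the window moves right, from `X_q` to `X_p` the centre
does; either way the likelihood ratio is nondecreasing, so `X_p - (p - q) ≤ X_q ≤ X_p` in the
stochastic order. Driving both quantile functions by one uniform `U`, i.e. `X_p = F_p⁻¹(U)` and
`X_q = F_q⁻¹(U)`, turns these orderings into the pointwise bounds `X_q ≤ X_p ≤ X_q + (p - q)`.
-/

open MeasureTheory
open scoped ENNReal

/-- The law of `X_p = p + ε(σ², p)` for `σ ∈ (0,∞]`; by convention, for `σ = ∞`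
it is the uniform distribution on `[0,1]`. -/
noncomputable def shiftedTruncGaussLaw (σ : ℝ≥0∞) (p : ℝ) : Measure ℝ :=
  if σ = ⊤ then volume.restrict (Set.Icc 0 1)
  else Measure.map (fun x => p + x) (truncGaussLaw σ.toReal p)

open Set Real ProbabilityTheory

section LikelihoodRatio

variable {α : Type*}

/-- `g / f` is nondecreasing, written without division so that both densities may vanish. -/
def MonotoneLikelihoodRatio [Preorder α] (f g : α → ℝ≥0∞) : Prop :=
  ∀ ⦃y z⦄, y ≤ z → g y * f z ≤ f y * g z

theorem MonotoneLikelihoodRatio.mul [Preorder α] {f₁ g₁ f₂ g₂ : α → ℝ≥0∞}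
    (h₁ : MonotoneLikelihoodRatio f₁ g₁) (h₂ : MonotoneLikelihoodRatio f₂ g₂) :
    MonotoneLikelihoodRatio (f₁ * f₂) (g₁ * g₂) := fun y z hyz =>
  calc g₁ y * g₂ y * (f₁ z * f₂ z) = g₁ y * f₁ z * (g₂ y * f₂ z) := by ring
    _ ≤ f₁ y * g₁ z * (f₂ y * g₂ z) := mul_le_mul' (h₁ hyz) (h₂ hyz)
    _ = f₁ y * f₂ y * (g₁ z * g₂ z) := by ring

theorem monotoneLikelihoodRatio_const [Preorder α] (a b : ℝ≥0∞) :
    MonotoneLikelihoodRatio (fun _ : α => a) (fun _ => b) := fun _ _ _ => (mul_comm b a).le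

theorem monotoneLikelihoodRatio_indicator_Icc [Preorder α] {l₁ u₁ l₂ u₂ : α}
    (hl : l₁ ≤ l₂) (hu : u₁ ≤ u₂) :
    MonotoneLikelihoodRatio ((Icc l₁ u₁).indicator 1) ((Icc l₂ u₂).indicator 1) := by
  intro y z hyz
  by_cases hy : y ∈ Icc l₂ u₂
  · by_cases hz : z ∈ Icc l₁ u₁
    · have hy' : y ∈ Icc l₁ u₁ := ⟨hl.trans hy.1, hyz.trans hz.2⟩
      have hz' : z ∈ Icc l₂ u₂ := ⟨hy.1.trans hyz, hz.2.trans hu⟩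
      simp [hy, hz, hy', hz']
    · simp [hz]
  · simp [hy]

theorem monotoneLikelihoodRatio_gaussian (s : ℝ) {a₁ a₂ : ℝ} (ha : a₁ ≤ a₂) :
    MonotoneLikelihoodRatio (fun x => ENNReal.ofReal (exp (-(x - a₁) ^ 2 / (2 * s ^ 2))))
      (fun x => ENNReal.ofReal (exp (-(x - a₂) ^ 2 / (2 * s ^ 2)))) := by
  intro y z hyz
  simp only [← ENNReal.ofReal_mul (exp_pos _).le, ← exp_add, ← add_div]
  refine ENNReal.ofReal_le_ofReal (exp_le_exp.2 (div_le_div_of_nonneg_right ?_ (by positivity)))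
  nlinarith [mul_nonneg (sub_nonneg.2 hyz) (sub_nonneg.2 ha)]

theorem MonotoneLikelihoodRatio.withDensity_Iic_mul_le [MeasurableSpace α] [LinearOrder α]
    [TopologicalSpace α] [OrderClosedTopology α] [OpensMeasurableSpace α] {μ : Measure α}
    {f g : α → ℝ≥0∞} (h : MonotoneLikelihoodRatio f g) (hf : Measurable f) (hg : Measurable g)
    (x : α) :
    μ.withDensity g (Iic x) * μ.withDensity f univ ≤
      μ.withDensity f (Iic x) * μ.withDensity g univ := by
  -- compare the masses of `Iic x ×ˢ Ioi x` under the product densities `g ⊗ f` and `f ⊗ g`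
  have cross : μ.withDensity g (Iic x) * μ.withDensity f (Ioi x) ≤
      μ.withDensity f (Iic x) * μ.withDensity g (Ioi x) := by
    simp only [withDensity_apply _ measurableSet_Iic, withDensity_apply _ measurableSet_Ioi,
      ← lintegral_mul_const _ hg, ← lintegral_mul_const _ hf, ← lintegral_const_mul _ hf,
      ← lintegral_const_mul _ hg]
    exact setLIntegral_mono' measurableSet_Iic fun y hy =>
      setLIntegral_mono' measurableSet_Ioi fun z hz => h (le_trans hy (le_of_lt hz))
  rw [← measure_add_measure_compl (μ := μ.withDensity f) measurableSet_Iic,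
    ← measure_add_measure_compl (μ := μ.withDensity g) measurableSet_Iic, compl_Iic, mul_add,
    mul_add]
  exact add_le_add (mul_comm _ _).le cross

end LikelihoodRatio

section TruncatedGaussian

noncomputable def truncGaussDensity (s a r : ℝ) : ℝ → ℝ≥0∞ :=
  (Icc (a - r) (a - r + 1)).indicator 1 *
    (fun x => ENNReal.ofReal (exp (-(x - a) ^ 2 / (2 * s ^ 2)))) *
    fun _ => ENNReal.ofReal (∫ y in Icc (-r) (1 - r), exp (-y ^ 2 / (2 * s ^ 2)))⁻¹

theorem measurable_truncGaussDensity (s a r : ℝ) : Measurable (truncGaussDensity s a r) :=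
  ((measurable_one.indicator measurableSet_Icc).mul (by fun_prop)).mul measurable_const

theorem monotoneLikelihoodRatio_truncGaussDensity (s : ℝ) {a₁ r₁ a₂ r₂ : ℝ} (ha : a₁ ≤ a₂)
    (hl : a₁ - r₁ ≤ a₂ - r₂) :
    MonotoneLikelihoodRatio (truncGaussDensity s a₁ r₁) (truncGaussDensity s a₂ r₂) :=
  ((monotoneLikelihoodRatio_indicator_Icc hl (by linarith)).mul
    (monotoneLikelihoodRatio_gaussian s ha)).mul (monotoneLikelihoodRatio_const _ _)

theorem map_const_add_truncGaussLaw (s a r : ℝ) :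
    (truncGaussLaw s r).map (a + ·) = volume.withDensity (truncGaussDensity s a r) := by
  ext t ht
  rw [Measure.map_apply (measurable_const_add a) ht, truncGaussLaw,
    ← withDensity_indicator measurableSet_Icc, withDensity_apply _ (measurable_const_add a ht),
    withDensity_apply _ ht, ← (measurePreserving_add_left volume a).setLIntegral_comp_preimage_emb
      (measurableEmbedding_addLeft a) (truncGaussDensity s a r) t]
  refine lintegral_congr fun y => ?_
  have hmem : a + y ∈ Icc (a - r) (a - r + 1) ↔ y ∈ Icc (-r) (1 - r) := by
    simp only [mem_Icc]; constructor <;> rintro ⟨h₁, h₂⟩ <;> constructor <;> linarith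
  by_cases hy : y ∈ Icc (-r) (1 - r)
  · simp [truncGaussDensity, hy, hmem, div_eq_mul_inv, ENNReal.ofReal_mul (exp_pos _).le]
  · simp [truncGaussDensity, hy, hmem]

theorem integral_Icc_gaussian_pos (s r : ℝ) :
    0 < ∫ y in Icc (-r) (1 - r), exp (-y ^ 2 / (2 * s ^ 2)) := by
  rw [integral_Icc_eq_integral_Ioc, ← intervalIntegral.integral_of_le (by linarith)]
  exact intervalIntegral.intervalIntegral_pos_of_pos_on
    (Continuous.intervalIntegrable (by fun_prop) _ _) (fun x _ => exp_pos _) (by linarith)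

instance isProbabilityMeasure_truncGaussLaw_s11 (s r : ℝ) :
    IsProbabilityMeasure (truncGaussLaw s r) := by
  constructor
  have hK := integral_Icc_gaussian_pos s r
  rw [truncGaussLaw, withDensity_apply _ MeasurableSet.univ, Measure.restrict_univ,
    ← ofReal_integral_eq_lintegral_ofReal
      (Continuous.integrableOn_Icc (by fun_prop)) (ae_of_all _ fun y => by positivity),
    integral_div, div_self hK.ne', ENNReal.ofReal_one]

instance isProbabilityMeasure_shiftedTruncGaussLaw (σ : ℝ≥0∞) (r : ℝ) :
    IsProbabilityMeasure (shiftedTruncGaussLaw σ r) := by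
  unfold shiftedTruncGaussLaw
  split_ifs
  · exact ⟨by simp⟩
  · exact Measure.isProbabilityMeasure_map (measurable_const_add r).aemeasurable

theorem map_const_add_truncGaussLaw_Iic_le (s : ℝ) {a₁ r₁ a₂ r₂ : ℝ} (ha : a₁ ≤ a₂)
    (hl : a₁ - r₁ ≤ a₂ - r₂) (x : ℝ) :
    (truncGaussLaw s r₂).map (a₂ + ·) (Iic x) ≤ (truncGaussLaw s r₁).map (a₁ + ·) (Iic x) := by
  have key := (monotoneLikelihoodRatio_truncGaussDensity s ha hl).withDensity_Iic_mul_le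
    (μ := volume) (measurable_truncGaussDensity s a₁ r₁) (measurable_truncGaussDensity s a₂ r₂) x
  have univ_eq (a r : ℝ) : (truncGaussLaw s r).map (a + ·) univ = 1 := by
    rw [Measure.map_apply (measurable_const_add a) .univ, preimage_univ, measure_univ]
  rwa [← map_const_add_truncGaussLaw, ← map_const_add_truncGaussLaw, univ_eq, univ_eq, mul_one,
    mul_one] at key

theorem shiftedTruncGaussLaw_Iic_le (σ : ℝ≥0∞) {p q : ℝ} (hqp : q ≤ p) (x : ℝ) :
    shiftedTruncGaussLaw σ p (Iic x) ≤ shiftedTruncGaussLaw σ q (Iic x) := by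
  unfold shiftedTruncGaussLaw
  split_ifs
  · exact le_rfl
  · exact map_const_add_truncGaussLaw_Iic_le _ hqp (by simp) x

theorem shiftedTruncGaussLaw_Iic_le_add (σ : ℝ≥0∞) {p q : ℝ} (hqp : q ≤ p) (x : ℝ) :
    shiftedTruncGaussLaw σ q (Iic x) ≤ shiftedTruncGaussLaw σ p (Iic (x + (p - q))) := by
  unfold shiftedTruncGaussLaw
  split_ifs
  · exact measure_mono (Iic_subset_Iic.2 (by linarith))
  · -- `X_p - (p - q)` has the law of `q + ε(σ², p)`
    have hshift : (truncGaussLaw σ.toReal p).map (p + ·) (Iic (x + (p - q))) =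
        (truncGaussLaw σ.toReal p).map (q + ·) (Iic x) := by
      simp only [Measure.map_apply (measurable_const_add _) measurableSet_Iic,
        preimage_const_add_Iic]
      ring_nf
    rw [hshift]
    exact map_const_add_truncGaussLaw_Iic_le _ le_rfl (by linarith) x

end TruncatedGaussian

section Quantile

/-- The generalized inverse of the cdf; only its values on `(0, 1)` matter. -/
noncomputable def quantile (μ : Measure ℝ) (u : ℝ) : ℝ :=
  sInf {x | u ≤ cdf μ x}

variable (μ : Measure ℝ)

theorem quantile_le_iff {u : ℝ} (hu : u ∈ Ioo 0 1) {x : ℝ} :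
    quantile μ u ≤ x ↔ u ≤ cdf μ x := by
  have hne : {x | u ≤ cdf μ x}.Nonempty :=
    ((tendsto_cdf_atTop μ).eventually (eventually_ge_nhds hu.2)).exists
  have hbdd : BddBelow {x | u ≤ cdf μ x} := by
    obtain ⟨a, ha⟩ :=
      ((tendsto_cdf_atBot μ).eventually (eventually_lt_nhds hu.1)).exists_forall_of_atBot
    exact ⟨a, fun y hy => le_of_not_gt fun hya => (ha y hya.le).not_ge hy⟩
  refine ⟨fun h => le_trans ?_ (monotone_cdf μ h), fun h => csInf_le hbdd h⟩
  -- right-continuity of the cdf puts the infimum into the set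
  refine ge_of_tendsto (((cdf μ).right_continuous _).mono Ioi_subset_Ici_self) ?_
  filter_upwards [self_mem_nhdsWithin] with y hy
  obtain ⟨z, hz, hzy⟩ := exists_lt_of_csInf_lt hne hy
  exact hz.trans (monotone_cdf μ hzy.le)

theorem monotoneOn_quantile : MonotoneOn (quantile μ) (Ioo 0 1) := fun _ hu _ hv huv =>
  (quantile_le_iff μ hu).2 (huv.trans ((quantile_le_iff μ hv).1 le_rfl))

theorem aemeasurable_quantile (ρ : Measure ℝ) : AEMeasurable (quantile μ) (ρ.restrict (Ioo 0 1)) :=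
  aemeasurable_restrict_of_monotoneOn measurableSet_Ioo (monotoneOn_quantile μ)

theorem map_quantile_volume_Ioo [IsProbabilityMeasure μ] :
    (volume.restrict (Ioo 0 1)).map (quantile μ) = μ := by
  refine Measure.ext_of_Iic _ _ fun x => ?_
  set c := cdf μ x
  have hpre : quantile μ ⁻¹' Iic x ∩ Ioo 0 1 = Iic c ∩ Ioo 0 1 := by
    ext u
    simp only [mem_inter_iff, mem_preimage, mem_Iic]
    exact ⟨fun h => ⟨(quantile_le_iff μ h.2).1 h.1, h.2⟩,
      fun h => ⟨(quantile_le_iff μ h.2).2 h.1, h.2⟩⟩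
  rw [Measure.map_apply_of_aemeasurable (aemeasurable_quantile μ _) measurableSet_Iic,
    Measure.restrict_apply' measurableSet_Ioo, hpre, ← ofReal_cdf]
  refine le_antisymm ?_ ?_
  · calc volume (Iic c ∩ Ioo 0 1) ≤ volume (Icc 0 c) :=
          measure_mono fun u hu => ⟨hu.2.1.le, hu.1⟩
      _ = ENNReal.ofReal c := by simp
  · calc ENNReal.ofReal c = volume (Ioo 0 c) := by simp
      _ ≤ volume (Iic c ∩ Ioo 0 1) :=
          measure_mono fun u hu => ⟨hu.2.le, hu.1, hu.2.trans_le (cdf_le_one μ x)⟩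

theorem quantile_le_quantile_add (ν : Measure ℝ) [IsProbabilityMeasure μ]
    [IsProbabilityMeasure ν] {c : ℝ} (h : ∀ x, ν (Iic x) ≤ μ (Iic (x + c))) {u : ℝ}
    (hu : u ∈ Ioo 0 1) :
    quantile μ u ≤ quantile ν u + c := by
  have hcdf : cdf ν (quantile ν u) ≤ cdf μ (quantile ν u + c) := by
    rw [← ENNReal.ofReal_le_ofReal_iff (cdf_nonneg _ _), ofReal_cdf, ofReal_cdf]
    exact h _
  exact (quantile_le_iff μ hu).2 (((quantile_le_iff ν hu).1 le_rfl).trans hcdf)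

end Quantile

theorem exists_coupling_of_ae {Ω α β : Type*} [MeasurableSpace Ω] [MeasurableSpace α]
    [MeasurableSpace β] {ρ : Measure Ω} [IsProbabilityMeasure ρ] {f : Ω → α} {g : Ω → β}
    (hf : AEMeasurable f ρ) (hg : AEMeasurable g ρ) {P : α × β → Prop}
    (hP : MeasurableSet {z | P z}) (h : ∀ᵐ ω ∂ρ, P (f ω, g ω)) :
    ∃ μ : Measure (α × β), IsProbabilityMeasure μ ∧ μ.map Prod.fst = ρ.map f ∧
      μ.map Prod.snd = ρ.map g ∧ ∀ᵐ z ∂μ, P z := by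
  have hfg : AEMeasurable (fun ω => (f ω, g ω)) ρ := hf.prodMk hg
  refine ⟨ρ.map fun ω => (f ω, g ω), Measure.isProbabilityMeasure_map hfg, ?_, ?_,
    (ae_map_iff hfg hP).2 h⟩
  · exact AEMeasurable.map_map_of_aemeasurable measurable_fst.aemeasurable hfg
  · exact AEMeasurable.map_map_of_aemeasurable measurable_snd.aemeasurable hfg

theorem monotone_contractive_coupling_general
    (δ : ℝ) (σ : ℝ≥0∞)
    (p q : ℝ)
    (hpq : 0 ≤ p - q) (hpq' : p - q ≤ δ) :
    ∃ μ : Measure (ℝ × ℝ), IsProbabilityMeasure μ ∧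
      μ.map Prod.fst = shiftedTruncGaussLaw σ p ∧
      μ.map Prod.snd = shiftedTruncGaussLaw σ q ∧
      ∀ᵐ z ∂μ, 0 ≤ z.1 - z.2 ∧ z.1 - z.2 ≤ δ := by
  have hqp : q ≤ p := sub_nonneg.1 hpq
  have : IsProbabilityMeasure (volume.restrict (Ioo (0 : ℝ) 1)) := ⟨by simp⟩
  rw [← map_quantile_volume_Ioo (shiftedTruncGaussLaw σ p),
    ← map_quantile_volume_Ioo (shiftedTruncGaussLaw σ q)]
  refine exists_coupling_of_ae (aemeasurable_quantile _ _) (aemeasurable_quantile _ _)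
    (by measurability) ?_
  filter_upwards [ae_restrict_mem measurableSet_Ioo] with u hu
  have hle := quantile_le_quantile_add (shiftedTruncGaussLaw σ q) (shiftedTruncGaussLaw σ p)
    (c := 0) (fun x => by rw [add_zero]; exact shiftedTruncGaussLaw_Iic_le σ hqp x) hu
  have hle_add := quantile_le_quantile_add _ _ (shiftedTruncGaussLaw_Iic_le_add σ hqp) hu
  constructor <;> linarith

/-- monotone contractive coupling: Fix `δ > 0`, `σ ∈ (0,∞]`, and
`p, q ∈ [0,1]` with `0 ≤ p - q ≤ δ`. Then there is a coupling of
`X_p ~ p + ε(σ², p)` and `X_q ~ q + ε(σ², q)` with `0 ≤ X_p - X_q ≤ δ` a.s. -/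
theorem monotone_contractive_coupling
    (δ : ℝ) (hδ : 0 < δ) (σ : ℝ≥0∞) (hσ : 0 < σ)
    (p q : ℝ) (hp : p ∈ Set.Icc (0:ℝ) 1) (hq : q ∈ Set.Icc (0:ℝ) 1)
    (hpq : 0 ≤ p - q) (hpq' : p - q ≤ δ) :
    ∃ μ : Measure (ℝ × ℝ), IsProbabilityMeasure μ ∧
      μ.map Prod.fst = shiftedTruncGaussLaw σ p ∧
      μ.map Prod.snd = shiftedTruncGaussLaw σ q ∧
      ∀ᵐ z ∂μ, 0 ≤ z.1 - z.2 ∧ z.1 - z.2 ≤ δ :=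
  monotone_contractive_coupling_general δ σ p q hpq hpq'
end

section
/- If p ∈ ℝ^d with weighted mean p̄ = ∑_i c_i p_i, then for any i, j, the inequality β² (p_i - p_j)² ≤ (2/λ) ⟨p, Δp⟩ holds, where β = min_i c_i and λ is the spectral gap of Δ. -/
/-!
Centre `p` at its weighted mean, `q = p - p̄`. The form `⟨p, Δp⟩` does not change, because
the row sums of the symmetric matrix `C` are the weights `c`, and `q` is orthogonal to the
constants, so the Poincaré inequality gives `λ ⟨q, q⟩ ≤ ⟨p, Δp⟩`. Finally, as `β ≤ c_k ≤ 1`,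
`β² (q_i - q_j)² ≤ 2 (c_i q_i² + c_j q_j²) ≤ 2 ⟨q, q⟩`.
-/

open Finset

/-- `⟨p, Δp⟩` for `Δ = I - D⁻¹C` and the inner product weighted by `c`. -/
noncomputable def dirichletForm {ι : Type*} [Fintype ι] (C : ι → ι → ℝ) (c p : ι → ℝ) : ℝ :=
  ∑ i, c i * p i * (p i - (∑ j, C i j * p j) / c i)

section

variable {ι : Type*} [Fintype ι] {C : ι → ι → ℝ} {c : ι → ℝ}

lemma sum_sum_mul_eq_of_symm (hsym : ∀ i j, C i j = C j i) (hc : ∀ i, c i = ∑ j, C i j)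
    (p : ι → ℝ) : ∑ i, ∑ j, C i j * p j = ∑ j, c j * p j := by
  rw [sum_comm]
  refine sum_congr rfl fun j _ => ?_
  rw [← sum_mul, hc j]
  simp only [hsym j]

lemma dirichletForm_sub_const (hsym : ∀ i j, C i j = C j i) (hc : ∀ i, c i = ∑ j, C i j)
    (hc0 : ∀ i, c i ≠ 0) (p : ι → ℝ) (a : ℝ) :
    dirichletForm C c (fun i => p i - a) = dirichletForm C c p := by
  have hterm : ∀ i, c i * (p i - a) * (p i - a - (∑ j, C i j * (p j - a)) / c i)
      = c i * p i * (p i - (∑ j, C i j * p j) / c i)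
        - a * (c i * p i - ∑ j, C i j * p j) := by
    intro i
    have hshift : ∑ j, C i j * (p j - a) = ∑ j, C i j * p j - c i * a := by
      simp only [mul_sub, sum_sub_distrib, ← sum_mul, hc i]
    rw [hshift]
    field_simp [hc0 i]
    ring
  unfold dirichletForm
  simp only [hterm, sum_sub_distrib, ← mul_sum, sum_sum_mul_eq_of_symm hsym hc, sub_self,
    mul_zero, sub_zero]

lemma sum_mul_sub_weightedMean (htot : ∑ i, c i = 1) (p : ι → ℝ) :
    ∑ i, c i * (p i - ∑ j, c j * p j) = 0 := by
  simp only [mul_sub, sum_sub_distrib, ← sum_mul, htot, one_mul, sub_self]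

lemma sq_mul_sq_sub_le {β a b x y : ℝ} (hβ : 0 ≤ β) (hβ1 : β ≤ 1) (hβa : β ≤ a)
    (hβb : β ≤ b) : β ^ 2 * (x - y) ^ 2 ≤ 2 * (a * x ^ 2 + b * y ^ 2) := by
  have hβ2a : β ^ 2 ≤ a := by nlinarith
  have hβ2b : β ^ 2 ≤ b := by nlinarith
  nlinarith [sq_nonneg (x + y), mul_le_mul_of_nonneg_right hβ2a (sq_nonneg x),
    mul_le_mul_of_nonneg_right hβ2b (sq_nonneg y), sq_nonneg β]

lemma sq_mul_sq_sub_le_two_mul_sum {β : ℝ} (hβ : 0 ≤ β) (hβc : ∀ i, β ≤ c i)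
    (htot : ∑ i, c i = 1) (q : ι → ℝ) (i j : ι) :
    β ^ 2 * (q i - q j) ^ 2 ≤ 2 * ∑ k, c k * q k * q k := by
  have hterm : ∀ k, 0 ≤ c k * q k * q k := fun k => by
    rw [mul_assoc]; exact mul_nonneg (hβ.trans (hβc k)) (mul_self_nonneg _)
  have hβ1 : β ≤ 1 := (hβc i).trans <| htot ▸
    single_le_sum (fun l _ => hβ.trans (hβc l)) (mem_univ i)
  classical
  obtain rfl | hij := eq_or_ne i j
  · simpa using mul_nonneg zero_le_two (sum_nonneg fun k _ => hterm k)
  calc β ^ 2 * (q i - q j) ^ 2 ≤ 2 * (c i * q i ^ 2 + c j * q j ^ 2) :=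
        sq_mul_sq_sub_le hβ hβ1 (hβc i) (hβc j)
    _ = 2 * ∑ k ∈ {i, j}, c k * q k * q k := by rw [sum_pair hij]; ring
    _ ≤ 2 * ∑ k, c k * q k * q k := by
        gcongr
        exacts [fun k _ _ => hterm k, subset_univ _]

end

theorem coordinate_spread_bound_general
    (d : ℕ) (C : Fin d → Fin d → ℝ)
    (hsym : ∀ i j, C i j = C j i)
    (c : Fin d → ℝ) (hc : ∀ i, c i = ∑ j, C i j)
    (hcpos : ∀ i, 0 < c i)
    (htot : ∑ i, c i = 1)
    (beta : ℝ) (hbeta : ∀ i, beta ≤ c i) (hbetapos : 0 < beta)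
    (lam : ℝ) (hlampos : 0 < lam)
    -- Poincaré inequality characterizing the spectral gap `λ`:
    (hlam : ∀ q : Fin d → ℝ, (∑ i, c i * q i = 0) →
      lam * (∑ i, c i * q i * q i)
        ≤ ∑ i, c i * q i * (q i - (∑ j, C i j * q j) / c i))
    (p : Fin d → ℝ) (i j : Fin d) :
    beta ^ 2 * (p i - p j) ^ 2
      ≤ (2 / lam) * ∑ i, c i * p i * (p i - (∑ j, C i j * p j) / c i) := by
  set pbar := ∑ k, c k * p k
  have hpoincare : lam * ∑ k, c k * (p k - pbar) * (p k - pbar) ≤ dirichletForm C c p := by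
    rw [← dirichletForm_sub_const hsym hc (fun k => (hcpos k).ne') p pbar]
    exact hlam _ (sum_mul_sub_weightedMean htot p)
  calc beta ^ 2 * (p i - p j) ^ 2 = beta ^ 2 * ((p i - pbar) - (p j - pbar)) ^ 2 := by ring
    _ ≤ 2 * ∑ k, c k * (p k - pbar) * (p k - pbar) :=
        sq_mul_sq_sub_le_two_mul_sum hbetapos.le hbeta htot (fun k => p k - pbar) i j
    _ ≤ 2 / lam * dirichletForm C c p := by
        rw [div_mul_eq_mul_div, le_div_iff₀ hlampos]
        linarith

/-- If `p ∈ ℝ^d`, then for any `i, j`,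
`β² (p_i - p_j)² ≤ (2/λ) ⟨p, Δp⟩`, where `β = min_i c_i` and `λ` is the spectral
gap of `Δ = I - D⁻¹C` (characterized by the Poincaré inequality on the
orthogonal complement of the constant vector). -/
theorem coordinate_spread_bound
    (d : ℕ) (hd : 2 ≤ d) (C : Fin d → Fin d → ℝ)
    (hsym : ∀ i j, C i j = C j i)
    (hnonneg : ∀ i j, 0 ≤ C i j)
    (hdiag : ∀ i, C i i = 0)
    (hconn : ∀ i j : Fin d, Relation.ReflTransGen (fun a b => 0 < C a b) i j)
    (c : Fin d → ℝ) (hc : ∀ i, c i = ∑ j, C i j)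
    (hcpos : ∀ i, 0 < c i)
    (htot : ∑ i, c i = 1)
    (beta : ℝ) (hbeta : ∀ i, beta ≤ c i) (hbetapos : 0 < beta)
    (lam : ℝ) (hlampos : 0 < lam)
    -- Poincaré inequality characterizing the spectral gap `λ`:
    (hlam : ∀ q : Fin d → ℝ, (∑ i, c i * q i = 0) →
      lam * (∑ i, c i * q i * q i)
        ≤ ∑ i, c i * q i * (q i - (∑ j, C i j * q j) / c i))
    (p : Fin d → ℝ) (i j : Fin d) :
    beta ^ 2 * (p i - p j) ^ 2
      ≤ (2 / lam) * ∑ i, c i * p i * (p i - (∑ j, C i j * p j) / c i) :=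
  coordinate_spread_bound_general d C hsym c hc hcpos htot beta hbeta hbetapos lam hlampos hlam p i
    j
end
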